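/- arXiv:1710.02981 — 2 statements merged into one kernel-verified Lean document; each statement's English description precedes it below -/
import Mathlib

section
/- Let 1 < α < 2 and let T be an absolutely (C,α)-Cesàro bounded operator on a complex Banach space X such that the set {θ ∈ [0, 2π) : e^{iθ} ∈ σ(T)} has Lebesgue measure zero. Then ‖M_T^α(n+1) − M_T^α(n)‖ → 0 as n → ∞. -/
open Filter
open scoped ENNReal

/-- The Cesàro kernel of order `α`: `k^α(n) = Γ(α+n) / (Γ(α)·Γ(n+1))`. -/
noncomputable def cesKernel (α : ℝ) (n : ℕ) : ℝ :=
  Real.Gamma (α + n) / (Real.Gamma α * Real.Gamma (n + 1))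

/-- A bounded linear operator `T` on a complex Banach space is absolutely `(C,α)`-Cesàro
bounded if there is `C > 0` with
`(1/k^{α+1}(n)) · Σ_{j=0}^n k^α(n-j) ‖T^j x‖ ≤ C ‖x‖` for all `n` and `x`. -/
def AbsCesaroBounded {X : Type*} [NormedAddCommGroup X] [NormedSpace ℂ X]
    (α : ℝ) (T : X →L[ℂ] X) : Prop :=
  ∃ C : ℝ, 0 < C ∧ ∀ (n : ℕ) (x : X),
    (cesKernel (α + 1) n)⁻¹ *
      ∑ j ∈ Finset.range (n + 1), cesKernel α (n - j) * ‖(T ^ j) x‖ ≤ C * ‖x‖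

/-- The Cesàro mean of order `α` of `T`:
`M_T^α(n) = (1/k^{α+1}(n)) · Σ_{j=0}^n k^α(n-j) T^j`. -/
noncomputable def cesMean {X : Type*} [NormedAddCommGroup X] [NormedSpace ℂ X]
    (α : ℝ) (T : X →L[ℂ] X) (n : ℕ) : X →L[ℂ] X :=
  (((cesKernel (α + 1) n)⁻¹ : ℝ) : ℂ) •
    ∑ j ∈ Finset.range (n + 1), ((cesKernel α (n - j) : ℝ) : ℂ) • T ^ j

section kernel
variable {β : ℝ}

lemma cesKernel_pos (hβ : 0 < β) (n : ℕ) : 0 < cesKernel β n := by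
  unfold cesKernel
  have h1 : (0:ℝ) < β + n := by positivity
  have h2 : (0:ℝ) < (n:ℝ) + 1 := by positivity
  exact div_pos (Real.Gamma_pos_of_pos h1)
    (mul_pos (Real.Gamma_pos_of_pos hβ) (Real.Gamma_pos_of_pos h2))

lemma cesKernel_zero (hβ : 0 < β) : cesKernel β 0 = 1 := by
  unfold cesKernel
  have := (Real.Gamma_pos_of_pos hβ).ne'
  simp [Real.Gamma_one, this]

lemma cesKernel_succ (hβ : 0 < β) (n : ℕ) :
    cesKernel β (n + 1) = cesKernel β n * ((β + n) / (n + 1)) := by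
  unfold cesKernel
  have e1 : β + ((n+1 : ℕ):ℝ) = (β + n) + 1 := by push_cast; ring
  have e2 : (((n+1:ℕ)):ℝ) + 1 = ((n:ℝ) + 1) + 1 := by push_cast; ring
  rw [e1, e2, Real.Gamma_add_one (by positivity : (0:ℝ) < β + n).ne',
    Real.Gamma_add_one (by positivity : (0:ℝ) < (n:ℝ) + 1).ne']
  have g1 := (Real.Gamma_pos_of_pos hβ).ne'
  have g2 := (Real.Gamma_pos_of_pos (by positivity : (0:ℝ) < (n:ℝ) + 1)).ne'
  have : ((n:ℝ) + 1) ≠ 0 := by positivity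
  field_simp

lemma cesKernel_shift (hβ : 0 < β) (n : ℕ) :
    cesKernel β n = cesKernel (β + 1) n * (β / (β + n)) := by
  unfold cesKernel
  have e1 : β + 1 + ((n:ℕ):ℝ) = (β + n) + 1 := by ring
  rw [e1, Real.Gamma_add_one (by positivity : (0:ℝ) < β + n).ne',
    Real.Gamma_add_one hβ.ne']
  have g1 := (Real.Gamma_pos_of_pos hβ).ne'
  have g2 := (Real.Gamma_pos_of_pos (by positivity : (0:ℝ) < (n:ℝ) + 1)).ne'
  have h1 : (β + (n:ℝ)) ≠ 0 := by positivity
  field_simp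

lemma cesKernel_sum (hβ : 0 < β) (n : ℕ) :
    ∑ m ∈ Finset.range (n + 1), cesKernel β m = cesKernel (β + 1) n := by
  induction n with
  | zero => simp [cesKernel_zero hβ, cesKernel_zero (by linarith : (0:ℝ) < β + 1)]
  | succ n ih =>
      rw [Finset.sum_range_succ, ih, cesKernel_succ (by linarith : (0:ℝ) < β + 1) n,
        cesKernel_shift hβ (n+1), cesKernel_succ (by linarith : (0:ℝ) < β + 1) n]
      have h1 : ((n:ℝ) + 1) ≠ 0 := by positivity
      have h2 : β + ((n+1:ℕ):ℝ) ≠ 0 := by push_cast; positivity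
      push_cast at h2 ⊢
      field_simp
      ring

lemma cesKernel_mono (hβ : 1 ≤ β) : Monotone (cesKernel β) := by
  have hβ0 : 0 < β := by linarith
  apply monotone_nat_of_le_succ
  intro n
  rw [cesKernel_succ hβ0 n]
  have hk := (cesKernel_pos hβ0 n).le
  have : (1:ℝ) ≤ (β + n) / (n + 1) := by
    rw [le_div_iff₀ (by positivity)]
    linarith
  nlinarith

lemma cesKernel_step {α : ℝ} (hα : 1 < α) (m : ℕ) :
    cesKernel α (m + 1) = cesKernel α m + cesKernel (α - 1) (m + 1) := by
  have h : cesKernel (α - 1) (m + 1) = cesKernel α (m + 1) * ((α - 1) / (α + m)) := by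
    have h0 := cesKernel_shift (by linarith : (0:ℝ) < α - 1) (m + 1)
    rw [sub_add_cancel] at h0
    rw [h0]
    congr 2
    push_cast
    ring
  rw [h, cesKernel_succ (by linarith : (0:ℝ) < α) m]
  have h1 : ((m:ℝ) + 1) ≠ 0 := by positivity
  have h2 : (α + (m:ℝ)) ≠ 0 := by positivity
  field_simp
  ring

lemma cesKernel_le_shift (hβ : 0 < β) (m : ℕ) : cesKernel β m ≤ cesKernel (β + 1) m := by
  rw [cesKernel_shift hβ m]
  have hk := (cesKernel_pos (by linarith : (0:ℝ) < β + 1) m).le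
  have hm : (0:ℝ) ≤ (m:ℝ) := Nat.cast_nonneg m
  have : β / (β + m) ≤ 1 := by
    rw [div_le_one (by positivity)]
    linarith
  nlinarith

end kernel

lemma cesMean_apply {X : Type*} [NormedAddCommGroup X] [NormedSpace ℂ X]
    (α : ℝ) (T : X →L[ℂ] X) (n : ℕ) (x : X) :
    cesMean α T n x =
      (cesKernel (α + 1) n)⁻¹ •
        ∑ j ∈ Finset.range (n + 1), cesKernel α (n - j) • (T ^ j) x := by
  simp [cesMean, ContinuousLinearMap.sum_apply]
  norm_cast

section ops
variable {X : Type*} [NormedAddCommGroup X] [NormedSpace ℂ X]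
variable {α C : ℝ} {T : X →L[ℂ] X}

/-- absolute Cesàro bound, multiplied out. -/
lemma habs_lemma (hα : 1 < α)
    (hb : ∀ (n : ℕ) (x : X), (cesKernel (α + 1) n)⁻¹ *
      ∑ j ∈ Finset.range (n + 1), cesKernel α (n - j) * ‖(T ^ j) x‖ ≤ C * ‖x‖)
    (n : ℕ) (x : X) :
    ∑ j ∈ Finset.range (n + 1), cesKernel α (n - j) * ‖(T ^ j) x‖
      ≤ C * cesKernel (α + 1) n * ‖x‖ := by
  have hk := cesKernel_pos (by linarith : (0:ℝ) < α + 1) n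
  have h := hb n x
  have h2 := mul_le_mul_of_nonneg_left h hk.le
  calc ∑ j ∈ Finset.range (n + 1), cesKernel α (n - j) * ‖(T ^ j) x‖
      = cesKernel (α + 1) n * ((cesKernel (α + 1) n)⁻¹ *
          ∑ j ∈ Finset.range (n + 1), cesKernel α (n - j) * ‖(T ^ j) x‖) := by
        rw [← mul_assoc, mul_inv_cancel₀ hk.ne', one_mul]
    _ ≤ cesKernel (α + 1) n * (C * ‖x‖) := h2
    _ = C * cesKernel (α + 1) n * ‖x‖ := by ring

/-- pointwise power bound. -/
lemma hpow_lemma (hα : 1 < α)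
    (hb : ∀ (n : ℕ) (x : X), (cesKernel (α + 1) n)⁻¹ *
      ∑ j ∈ Finset.range (n + 1), cesKernel α (n - j) * ‖(T ^ j) x‖ ≤ C * ‖x‖)
    (n : ℕ) (x : X) :
    ‖(T ^ n) x‖ ≤ C * cesKernel (α + 1) n * ‖x‖ := by
  refine le_trans ?_ (habs_lemma hα hb n x)
  have hmem : n ∈ Finset.range (n + 1) := Finset.self_mem_range_succ n
  have h := Finset.single_le_sum
    (f := fun j => cesKernel α (n - j) * ‖(T ^ j) x‖)
    (fun j _ => mul_nonneg (cesKernel_pos (by linarith : (0:ℝ) < α) _).le (norm_nonneg _))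
    hmem
  simpa [Nat.sub_self, cesKernel_zero (by linarith : (0:ℝ) < α)] using h

/-- little-o power bound. -/
lemma hpowB_lemma (hα : 1 < α) (hC : 0 < C)
    (hb : ∀ (n : ℕ) (x : X), (cesKernel (α + 1) n)⁻¹ *
      ∑ j ∈ Finset.range (n + 1), cesKernel α (n - j) * ‖(T ^ j) x‖ ≤ C * ‖x‖) :
    ∀ ε > (0:ℝ), ∃ N : ℕ, ∀ n ≥ N, ∀ x : X,
      ‖(T ^ n) x‖ ≤ ε * cesKernel (α + 1) n * ‖x‖ := by
  have hα0 : (0:ℝ) < α := by linarith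
  intro ε hε
  set H : ℕ → ℝ := fun n => ∑ m ∈ Finset.range (n + 1), α / (α + m) with hH
  have hHdiv : Tendsto H atTop atTop := by
    have h1 : Tendsto (fun n : ℕ => ∑ i ∈ Finset.range (n + 1), (1 / (i + 1) : ℝ))
        atTop atTop :=
      Real.tendsto_sum_range_one_div_nat_succ_atTop.comp (tendsto_add_atTop_nat 1)
    have h2 := h1.const_mul_atTop (show (0:ℝ) < α / (α + 1) by positivity)
    apply tendsto_atTop_mono _ h2
    intro n
    simp only [Finset.mul_sum]
    apply Finset.sum_le_sum
    intro m _
    rw [div_mul_div_comm, mul_one]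
    apply div_le_div_of_nonneg_left hα0.le (by positivity)
    have : (0:ℝ) ≤ (m:ℝ) := Nat.cast_nonneg m
    nlinarith
  obtain ⟨N, hN⟩ := eventually_atTop.mp (hHdiv.eventually_ge_atTop (C * C / ε))
  refine ⟨N, fun n hn x => ?_⟩
  have hHn := hN n hn
  have hHpos : 0 < H n := lt_of_lt_of_le (by positivity) hHn
  have key : ∀ j ∈ Finset.range (n + 1),
      α / (α + ((n - j : ℕ):ℝ)) * ‖(T ^ n) x‖
        ≤ C * (cesKernel α (n - j) * ‖(T ^ j) x‖) := by
    intro j hj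
    have hj' : j ≤ n := Nat.lt_succ_iff.mp (Finset.mem_range.mp hj)
    have hTn : (T ^ n) x = (T ^ (n - j)) ((T ^ j) x) := by
      have h : T ^ (n - j) * T ^ j = T ^ n := by
        rw [← pow_add, Nat.sub_add_cancel hj']
      rw [← h]; rfl
    have h1 : ‖(T ^ n) x‖ ≤ C * cesKernel (α + 1) (n - j) * ‖(T ^ j) x‖ := by
      rw [hTn]; exact hpow_lemma hα hb (n - j) ((T ^ j) x)
    have hsh := cesKernel_shift hα0 (n - j)
    calc α / (α + ((n - j : ℕ):ℝ)) * ‖(T ^ n) x‖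
        ≤ α / (α + ((n - j : ℕ):ℝ)) * (C * cesKernel (α + 1) (n - j) * ‖(T ^ j) x‖) :=
          mul_le_mul_of_nonneg_left h1 (by positivity)
      _ = C * (cesKernel α (n - j) * ‖(T ^ j) x‖) := by rw [hsh]; ring
  have hsum : H n * ‖(T ^ n) x‖ ≤ C * (C * cesKernel (α + 1) n * ‖x‖) := by
    have h2 := Finset.sum_le_sum key
    rw [← Finset.sum_mul, ← Finset.mul_sum] at h2
    have hrefl : ∑ j ∈ Finset.range (n + 1), α / (α + ((n - j : ℕ):ℝ)) = H n := by
      rw [hH]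
      have := Finset.sum_range_reflect (fun m => α / (α + (m:ℝ))) (n + 1)
      simpa using this
    rw [hrefl] at h2
    exact le_trans h2 (mul_le_mul_of_nonneg_left (habs_lemma hα hb n x) hC.le)
  have hk := cesKernel_pos (by linarith : (0:ℝ) < α + 1) n
  have hCC : C * C ≤ ε * H n := by
    have := mul_le_mul_of_nonneg_left hHn hε.le
    calc C * C = ε * (C * C / ε) := by field_simp
      _ ≤ ε * H n := this
  nlinarith [norm_nonneg ((T ^ n) x), norm_nonneg x, mul_nonneg hk.le (norm_nonneg x)]

end ops

set_option maxHeartbeats 1000000 in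
/-- Let `1 < α < 2` and `T` absolutely `(C,α)`-Cesàro bounded on a complex Banach space
with `m({θ ∈ [0,2π) : e^{iθ} ∈ σ(T)}) = 0`. Then `‖M_T^α(n+1) - M_T^α(n)‖ → 0`. -/
theorem stmt16 {X : Type*} [NormedAddCommGroup X] [NormedSpace ℂ X] [CompleteSpace X]
    (α : ℝ) (hα1 : 1 < α) (hα2 : α < 2) (T : X →L[ℂ] X) (hT : AbsCesaroBounded α T)
    (hσ : MeasureTheory.volume
        {θ : ℝ | θ ∈ Set.Ico (0 : ℝ) (2 * Real.pi) ∧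
          Complex.exp (θ * Complex.I) ∈ spectrum ℂ T} = 0) :
    Tendsto (fun n : ℕ => ‖cesMean α T (n + 1) - cesMean α T n‖) atTop (nhds 0) := by
  obtain ⟨C, hC, hb⟩ := hT
  have hα0 : (0:ℝ) < α := by linarith
  have hαm : (0:ℝ) < α - 1 := by linarith
  have hαs : (0:ℝ) < α + 1 := by linarith
  rw [Metric.tendsto_atTop]
  intro ε hε
  -- choose m₀
  obtain ⟨m₁, hm₁⟩ := exists_nat_ge (4 * (α - 1) * C / ε)
  set m₀ : ℕ := m₁ + 1 with hm₀def
  have hm₀R : 4 * (α - 1) * C ≤ ε * ((α - 1) + m₀) := by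
    have h1 : 4 * (α - 1) * C / ε ≤ (m₀ : ℝ) := by
      rw [hm₀def]; push_cast; push_cast at hm₁; linarith
    have := mul_le_mul_of_nonneg_left h1 hε.le
    rw [mul_div_cancel₀ _ hε.ne'] at this
    nlinarith
  have hκ := cesKernel_pos hαs m₀
  set ε₂ : ℝ := ε / (4 * (m₀ + 1) * cesKernel (α + 1) m₀) with hε₂def
  have hε₂ : 0 < ε₂ := by
    apply div_pos hε
    positivity
  obtain ⟨N₁, hN₁⟩ := hpowB_lemma hα1 hC hb ε₂ hε₂
  obtain ⟨N₃, hN₃⟩ := exists_nat_ge (4 * C * α / ε)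
  refine ⟨N₁ + N₃ + m₀ + 2, fun n hn => ?_⟩
  rw [Real.dist_eq, sub_zero, abs_of_nonneg (norm_nonneg _)]
  have hbound : ‖cesMean α T (n + 1) - cesMean α T n‖ ≤ 3 * ε / 4 := by
    apply ContinuousLinearMap.opNorm_le_bound _ (by positivity)
    intro x
    set a : ℝ := cesKernel (α + 1) n with hadef
    set b : ℝ := cesKernel (α + 1) (n + 1) with hbdef
    have ha : 0 < a := cesKernel_pos hαs n
    have hbp : 0 < b := cesKernel_pos hαs (n + 1)
    have hab : a ≤ b := cesKernel_mono (by linarith) (Nat.le_succ n)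
    set Sx : X := ∑ j ∈ Finset.range (n + 1), cesKernel α (n - j) • (T ^ j) x with hSx
    set Rx : X := ∑ j ∈ Finset.range (n + 1 + 1), cesKernel (α - 1) (n + 1 - j) • (T ^ j) x
      with hRx
    have hsum : ∑ j ∈ Finset.range (n + 1 + 1), cesKernel α (n + 1 - j) • (T ^ j) x
        = Sx + Rx := by
      have e1 : ∀ j ∈ Finset.range (n + 1), cesKernel α (n + 1 - j) • (T ^ j) x
          = cesKernel α (n - j) • (T ^ j) x + cesKernel (α - 1) (n + 1 - j) • (T ^ j) x := by
        intro j hj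
        have hj' : j ≤ n := Nat.lt_succ_iff.mp (Finset.mem_range.mp hj)
        have h2 : n + 1 - j = (n - j) + 1 := by omega
        rw [h2, cesKernel_step hα1, add_smul]
      rw [hSx, hRx,
        Finset.sum_range_succ (fun j => cesKernel α (n + 1 - j) • (T ^ j) x) (n + 1),
        Finset.sum_range_succ (fun j => cesKernel (α - 1) (n + 1 - j) • (T ^ j) x) (n + 1),
        Finset.sum_congr rfl e1, Finset.sum_add_distrib]
      simp only [Nat.sub_self]
      rw [cesKernel_zero hα0, cesKernel_zero hαm]
      simp only [one_smul]
      abel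
    have hid : (cesMean α T (n + 1) - cesMean α T n) x = b⁻¹ • Rx - (a⁻¹ - b⁻¹) • Sx := by
      rw [ContinuousLinearMap.sub_apply, cesMean_apply, cesMean_apply, hsum]
      rw [smul_add, sub_smul]
      abel
    -- norm of Sx
    have hnormS : ‖Sx‖ ≤ C * a * ‖x‖ := by
      refine le_trans (norm_sum_le _ _) ?_
      refine le_trans (le_of_eq (Finset.sum_congr rfl (fun j _ => ?_)))
        (habs_lemma hα1 hb n x)
      rw [norm_smul, Real.norm_eq_abs, abs_of_nonneg (cesKernel_pos hα0 _).le]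
    have hnormR : ‖Rx‖ ≤ ∑ j ∈ Finset.range (n + 1 + 1),
        cesKernel (α - 1) (n + 1 - j) * ‖(T ^ j) x‖ := by
      refine le_trans (norm_sum_le _ _) (le_of_eq (Finset.sum_congr rfl (fun j _ => ?_)))
      rw [norm_smul, Real.norm_eq_abs, abs_of_nonneg (cesKernel_pos hαm _).le]
    -- split ρ
    set p : ℕ := n + 2 - m₀ with hpdef
    have hsplit : ∑ j ∈ Finset.range (n + 1 + 1), cesKernel (α - 1) (n + 1 - j) * ‖(T ^ j) x‖
        = (∑ j ∈ Finset.Ico 0 p, cesKernel (α - 1) (n + 1 - j) * ‖(T ^ j) x‖)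
          + ∑ j ∈ Finset.Ico p (n + 1 + 1), cesKernel (α - 1) (n + 1 - j) * ‖(T ^ j) x‖ := by
      rw [Finset.range_eq_Ico,
        ← Finset.sum_Ico_consecutive _ (Nat.zero_le p) (by omega : p ≤ n + 1 + 1)]
    have hpart1 : ∑ j ∈ Finset.Ico 0 p, cesKernel (α - 1) (n + 1 - j) * ‖(T ^ j) x‖
        ≤ ((α - 1) / ((α - 1) + m₀)) * (C * b * ‖x‖) := by
      have hstep : ∀ j ∈ Finset.Ico 0 p,
          cesKernel (α - 1) (n + 1 - j) * ‖(T ^ j) x‖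
            ≤ ((α - 1) / ((α - 1) + m₀)) * (cesKernel α (n + 1 - j) * ‖(T ^ j) x‖) := by
        intro j hj
        have hjp : j < p := (Finset.mem_Ico.mp hj).2
        have hm : m₀ ≤ n + 1 - j := by omega
        have hsh : cesKernel (α - 1) (n + 1 - j)
            = cesKernel α (n + 1 - j) * ((α - 1) / ((α - 1) + ((n + 1 - j : ℕ):ℝ))) := by
          have h0 := cesKernel_shift hαm (n + 1 - j)
          rwa [sub_add_cancel] at h0
        rw [hsh]
        have hr : (α - 1) / ((α - 1) + ((n + 1 - j : ℕ):ℝ)) ≤ (α - 1) / ((α - 1) + m₀) := by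
          apply div_le_div_of_nonneg_left hαm.le (by positivity)
          have : (m₀:ℝ) ≤ ((n + 1 - j : ℕ):ℝ) := Nat.cast_le.mpr hm
          linarith
        have hk0 := (cesKernel_pos hα0 (n + 1 - j)).le
        have hn0 := norm_nonneg ((T ^ j) x)
        calc cesKernel α (n + 1 - j) * ((α - 1) / ((α - 1) + ((n + 1 - j : ℕ):ℝ))) * ‖(T ^ j) x‖
            = ((α - 1) / ((α - 1) + ((n + 1 - j : ℕ):ℝ)))
                * (cesKernel α (n + 1 - j) * ‖(T ^ j) x‖) := by ring
          _ ≤ ((α - 1) / ((α - 1) + (m₀:ℝ))) * (cesKernel α (n + 1 - j) * ‖(T ^ j) x‖) :=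
              mul_le_mul_of_nonneg_right hr (mul_nonneg hk0 hn0)
      refine le_trans (Finset.sum_le_sum hstep) ?_
      rw [← Finset.mul_sum]
      apply mul_le_mul_of_nonneg_left _ (by positivity)
      have hsub : ∑ j ∈ Finset.Ico 0 p, cesKernel α (n + 1 - j) * ‖(T ^ j) x‖
          ≤ ∑ j ∈ Finset.range (n + 1 + 1), cesKernel α (n + 1 - j) * ‖(T ^ j) x‖ := by
        refine Finset.sum_le_sum_of_subset_of_nonneg ?_
          (fun j _ _ => mul_nonneg (cesKernel_pos hα0 _).le (norm_nonneg _))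
        rw [Finset.range_eq_Ico]
        exact Finset.Ico_subset_Ico (le_refl 0) (by omega)
      exact le_trans hsub (habs_lemma hα1 hb (n + 1) x)
    have hpart2 : ∑ j ∈ Finset.Ico p (n + 1 + 1), cesKernel (α - 1) (n + 1 - j) * ‖(T ^ j) x‖
        ≤ (m₀ : ℝ) * (cesKernel (α + 1) m₀ * (ε₂ * b * ‖x‖)) := by
      have hstep : ∀ j ∈ Finset.Ico p (n + 1 + 1),
          cesKernel (α - 1) (n + 1 - j) * ‖(T ^ j) x‖
            ≤ cesKernel (α + 1) m₀ * (ε₂ * b * ‖x‖) := by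
        intro j hj
        obtain ⟨hj1, hj2⟩ := Finset.mem_Ico.mp hj
        have hjN : N₁ ≤ j := by omega
        have hkm : cesKernel (α - 1) (n + 1 - j) ≤ cesKernel (α + 1) m₀ := by
          calc cesKernel (α - 1) (n + 1 - j) ≤ cesKernel (α - 1 + 1) (n + 1 - j) :=
                cesKernel_le_shift hαm _
            _ ≤ cesKernel (α + 1) (n + 1 - j) := by
                rw [sub_add_cancel]
                exact cesKernel_le_shift hα0 _
            _ ≤ cesKernel (α + 1) m₀ := cesKernel_mono (by linarith) (by omega)
        have hT2 : ‖(T ^ j) x‖ ≤ ε₂ * b * ‖x‖ := by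
          have h1 := hN₁ j hjN x
          have h2 : cesKernel (α + 1) j ≤ b := cesKernel_mono (by linarith) (by omega)
          have h3 : ε₂ * cesKernel (α + 1) j * ‖x‖ ≤ ε₂ * b * ‖x‖ := by
            apply mul_le_mul_of_nonneg_right _ (norm_nonneg x)
            exact mul_le_mul_of_nonneg_left h2 hε₂.le
          linarith
        have := (cesKernel_pos hαm (n + 1 - j)).le
        exact mul_le_mul hkm hT2 (norm_nonneg _) hκ.le
      refine le_trans (Finset.sum_le_card_nsmul _ _ _ hstep) ?_
      rw [Nat.card_Ico, nsmul_eq_mul]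
      have hcard : n + 1 + 1 - p = m₀ := by omega
      rw [hcard]
    -- coefficient computation for the S part
    have hba : b = a + cesKernel α (n + 1) := by
      rw [hadef, hbdef, ← cesKernel_sum hα0 n, ← cesKernel_sum hα0 (n + 1),
        Finset.sum_range_succ]
    have hratio : (a⁻¹ - b⁻¹) * a = α / (α + ((n + 1 : ℕ):ℝ)) := by
      have h1 : (a⁻¹ - b⁻¹) * a = (b - a) / b := by
        field_simp
      rw [h1]
      have h3 : b - a = cesKernel α (n + 1) := by rw [hba]; ring
      have h2 := cesKernel_shift hα0 (n + 1)
      rw [← hbdef] at h2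
      rw [h3, h2, mul_div_cancel_left₀ _ hbp.ne']
    have hNn : (N₃ : ℝ) ≤ (n : ℝ) := by
      have : N₃ ≤ n := by omega
      exact_mod_cast this
    have hB2 : (a⁻¹ - b⁻¹) * ‖Sx‖ ≤ ε / 4 * ‖x‖ := by
      have hcoef : 0 ≤ a⁻¹ - b⁻¹ := by
        rw [sub_nonneg]
        exact inv_anti₀ ha hab
      have hc1 : (a⁻¹ - b⁻¹) * ‖Sx‖ ≤ (a⁻¹ - b⁻¹) * (C * a * ‖x‖) :=
        mul_le_mul_of_nonneg_left hnormS hcoef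
      have hc2 : (a⁻¹ - b⁻¹) * (C * a * ‖x‖) = C * (α / (α + ((n + 1 : ℕ):ℝ))) * ‖x‖ := by
        rw [show (a⁻¹ - b⁻¹) * (C * a * ‖x‖) = ((a⁻¹ - b⁻¹) * a) * (C * ‖x‖) by ring,
          hratio]
        ring
      have hc3 : C * (α / (α + ((n + 1 : ℕ):ℝ))) ≤ ε / 4 := by
        have hd : (0:ℝ) < α + ((n + 1 : ℕ):ℝ) := by positivity
        rw [mul_div_assoc', div_le_div_iff₀ hd (by norm_num : (0:ℝ) < 4)]
        have h4 : 4 * C * α ≤ ε * (N₃ : ℝ) := by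
          have h5 := mul_le_mul_of_nonneg_left hN₃ hε.le
          rw [mul_div_cancel₀ _ hε.ne'] at h5
          linarith
        have h6 : (N₃:ℝ) ≤ ((n + 1 : ℕ):ℝ) := by
          exact_mod_cast (by omega : N₃ ≤ n + 1)
        nlinarith [hε.le, hα0.le]
      calc (a⁻¹ - b⁻¹) * ‖Sx‖ ≤ (a⁻¹ - b⁻¹) * (C * a * ‖x‖) := hc1
        _ = C * (α / (α + ((n + 1 : ℕ):ℝ))) * ‖x‖ := hc2
        _ ≤ ε / 4 * ‖x‖ := mul_le_mul_of_nonneg_right hc3 (norm_nonneg x)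
    have hB1 : b⁻¹ * ‖Rx‖ ≤ ε / 4 * ‖x‖ + ε / 4 * ‖x‖ := by
      have hδC : ((α - 1) / ((α - 1) + m₀)) * C ≤ ε / 4 := by
        rw [div_mul_eq_mul_div, div_le_div_iff₀ (by positivity) (by norm_num)]
        linarith
      have hmκ : (m₀ : ℝ) * (cesKernel (α + 1) m₀ * ε₂) ≤ ε / 4 := by
        have hm0 : (0:ℝ) ≤ (m₀:ℝ) := Nat.cast_nonneg m₀
        have he : (m₀ : ℝ) * (cesKernel (α + 1) m₀ * ε₂)
            = ε * ((m₀:ℝ) / (4 * ((m₀:ℝ) + 1))) := by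
          rw [hε₂def]
          field_simp
        rw [he]
        have h7 : (m₀:ℝ) / (4 * ((m₀:ℝ) + 1)) ≤ 1 / 4 := by
          rw [div_le_div_iff₀ (by positivity) (by norm_num)]
          linarith
        calc ε * ((m₀:ℝ) / (4 * ((m₀:ℝ) + 1))) ≤ ε * (1 / 4) :=
              mul_le_mul_of_nonneg_left h7 hε.le
          _ = ε / 4 := by ring
      have h1 : b⁻¹ * ‖Rx‖ ≤ b⁻¹ * (((α - 1) / ((α - 1) + m₀)) * (C * b * ‖x‖)
          + (m₀ : ℝ) * (cesKernel (α + 1) m₀ * (ε₂ * b * ‖x‖))) := by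
        apply mul_le_mul_of_nonneg_left _ (by positivity)
        rw [hsplit] at hnormR
        exact le_trans hnormR (add_le_add hpart1 hpart2)
      have h2 : b⁻¹ * (((α - 1) / ((α - 1) + m₀)) * (C * b * ‖x‖)
          + (m₀ : ℝ) * (cesKernel (α + 1) m₀ * (ε₂ * b * ‖x‖)))
          = ((α - 1) / ((α - 1) + m₀)) * C * ‖x‖
            + ((m₀ : ℝ) * (cesKernel (α + 1) m₀ * ε₂)) * ‖x‖ := by
        field_simp
      rw [h2] at h1
      refine le_trans h1 (add_le_add ?_ ?_)
      · exact mul_le_mul_of_nonneg_right hδC (norm_nonneg x)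
      · exact mul_le_mul_of_nonneg_right hmκ (norm_nonneg x)
    -- assemble
    calc ‖(cesMean α T (n + 1) - cesMean α T n) x‖
        = ‖b⁻¹ • Rx - (a⁻¹ - b⁻¹) • Sx‖ := by rw [hid]
      _ ≤ ‖b⁻¹ • Rx‖ + ‖(a⁻¹ - b⁻¹) • Sx‖ := norm_sub_le _ _
      _ = b⁻¹ * ‖Rx‖ + |a⁻¹ - b⁻¹| * ‖Sx‖ := by
          rw [norm_smul, norm_smul, Real.norm_eq_abs, Real.norm_eq_abs,
            abs_of_nonneg (by positivity : (0:ℝ) ≤ b⁻¹)]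
      _ = b⁻¹ * ‖Rx‖ + (a⁻¹ - b⁻¹) * ‖Sx‖ := by
          rw [abs_of_nonneg (by rw [sub_nonneg]; exact inv_anti₀ ha hab)]
      _ ≤ (ε / 4 * ‖x‖ + ε / 4 * ‖x‖) + ε / 4 * ‖x‖ := add_le_add hB1 hB2
      _ = 3 * ε / 4 * ‖x‖ := by ring
  linarith
end

section
/- Let 1 < α < 2 and let T be an absolutely (C,α)-Cesàro bounded operator on a complex Banach space X. Then ‖M_T^α(n)(T − I)²‖ → 0 as n → ∞, where I is the identity operator. -/
open Filter
open scoped ENNReal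

namespace Stmt18Aux


lemma gammaNatPos (m : ℕ) : 0 < Real.Gamma ((m : ℝ) + 1) :=
  Real.Gamma_pos_of_pos (by positivity)

lemma kzero (β : ℝ) (hβ : Real.Gamma β ≠ 0) : cesKernel β 0 = 1 := by
  unfold cesKernel
  rw [Nat.cast_zero, add_zero, zero_add, Real.Gamma_one, mul_one, div_self hβ]

lemma kpos (β : ℝ) (hβ : 0 < β) (m : ℕ) : 0 < cesKernel β m := by
  unfold cesKernel
  have h1 : 0 < Real.Gamma (β + m) := Real.Gamma_pos_of_pos (by positivity)
  have h2 : 0 < Real.Gamma β := Real.Gamma_pos_of_pos hβ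
  have h3 : 0 < Real.Gamma ((m:ℝ) + 1) := gammaNatPos m
  positivity

lemma krec (β : ℝ) (m : ℕ) (h1 : β + (m:ℝ) ≠ 0) (h2 : β - 1 ≠ 0)
    (h3 : Real.Gamma (β - 1) ≠ 0) :
    cesKernel β (m+1) = cesKernel β m + cesKernel (β-1) (m+1) := by
  have hGβ : Real.Gamma β = (β - 1) * Real.Gamma (β - 1) := by
    have h := Real.Gamma_add_one h2
    rw [sub_add_cancel] at h
    exact h
  unfold cesKernel
  push_cast
  have hm1 : ((m:ℝ) + 1) ≠ 0 := by positivity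
  have hgm : Real.Gamma ((m:ℝ) + 1) ≠ 0 := ne_of_gt (gammaNatPos m)
  rw [show β + ((m:ℝ) + 1) = (β + m) + 1 by ring,
      Real.Gamma_add_one h1,
      show (m:ℝ) + 1 + 1 = ((m:ℝ) + 1) + 1 from rfl,
      Real.Gamma_add_one hm1,
      show β - 1 + ((m:ℝ) + 1) = β + m by ring, hGβ]
  field_simp
  ring

lemma kratio (β : ℝ) (m : ℕ) (h0 : β ≠ 0) (h1 : β + (m:ℝ) ≠ 0)
    (h3 : Real.Gamma β ≠ 0) :
    cesKernel (β+1) m * β = cesKernel β m * (β + m) := by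
  unfold cesKernel
  rw [show β + 1 + (m:ℝ) = (β + m) + 1 by ring, Real.Gamma_add_one h1,
      Real.Gamma_add_one h0]
  have hgm : Real.Gamma ((m:ℝ) + 1) ≠ 0 := ne_of_gt (gammaNatPos m)
  field_simp

section KernelFacts

variable {α : ℝ} (hα1 : 1 < α) (hα2 : α < 2)
include hα1 hα2

lemma hGa2ne : Real.Gamma (α - 2) ≠ 0 := by
  apply Real.Gamma_ne_zero
  intro n
  rcases n with _ | n
  · push_cast; intro h; linarith
  · push_cast; intro h; have : (0:ℝ) ≤ n := Nat.cast_nonneg n; linarith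

lemma kratio2 (m : ℕ) :
    cesKernel (α-2) m * ((α-2+m)*(α-1+m)) = cesKernel α m * ((α-2)*(α-1)) := by
  have hnn : (0:ℝ) ≤ m := Nat.cast_nonneg m
  have hm0 : α - 2 + (m:ℝ) ≠ 0 := by
    rcases Nat.eq_zero_or_pos m with h | h
    · subst h; push_cast; intro hc; linarith
    · have : (1:ℝ) ≤ m := by exact_mod_cast h
      intro hc; linarith
  have hm1 : α - 2 + (m:ℝ) + 1 ≠ 0 := by intro hc; linarith
  have hGα : Real.Gamma α = ((α-2)+1) * ((α-2) * Real.Gamma (α-2)) := by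
    have h1 := Real.Gamma_add_one (show α - 2 ≠ 0 by intro h; linarith)
    have h2 := Real.Gamma_add_one (show α - 2 + 1 ≠ 0 by intro h; linarith)
    rw [h1] at h2
    rw [show α - 2 + 1 + 1 = α by ring] at h2
    exact h2
  have hΓ2 : Real.Gamma (α - 2) ≠ 0 := hGa2ne hα1 hα2
  unfold cesKernel
  rw [show α + (m:ℝ) = ((α - 2 + m) + 1) + 1 by ring, Real.Gamma_add_one hm1,
      Real.Gamma_add_one hm0, hGα,
      show α - 2 + (m:ℝ) = α - 2 + m from rfl]
  have hgm : Real.Gamma ((m:ℝ) + 1) ≠ 0 := ne_of_gt (gammaNatPos m)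
  have hne1 : α - 2 + 1 ≠ 0 := by intro h; linarith
  have hne2 : α - 2 ≠ 0 := by intro h; linarith
  field_simp
  ring

lemma krecα (m : ℕ) : cesKernel α (m+1) = cesKernel α m + cesKernel (α-1) (m+1) := by
  apply krec α m
  · have : (0:ℝ) ≤ m := Nat.cast_nonneg m; intro h; linarith
  · intro h; linarith
  · exact ne_of_gt (Real.Gamma_pos_of_pos (by linarith))

lemma krecα1 (m : ℕ) :
    cesKernel (α-1) (m+1) = cesKernel (α-1) m + cesKernel (α-2) (m+1) := by
  have h := krec (α-1) m (by have : (0:ℝ) ≤ m := Nat.cast_nonneg m; intro h; linarith)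
    (by intro h; linarith)
    (by rw [show α - 1 - 1 = α - 2 by ring]; exact hGa2ne hα1 hα2)
  rwa [show α - 1 - 1 = α - 2 by ring] at h

lemma krecK (m : ℕ) :
    cesKernel (α+1) (m+1) = cesKernel (α+1) m + cesKernel α (m+1) := by
  have h := krec (α+1) m (by have : (0:ℝ) ≤ m := Nat.cast_nonneg m; intro h; linarith)
    (by intro h; linarith)
    (by rw [show α + 1 - 1 = α by ring]; exact ne_of_gt (Real.Gamma_pos_of_pos (by linarith)))
  rwa [show α + 1 - 1 = α by ring] at h

lemma kneg (m : ℕ) (hm : 1 ≤ m) : cesKernel (α-2) m < 0 := by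
  have h := kratio2 hα1 hα2 m
  have hm' : (1:ℝ) ≤ m := by exact_mod_cast hm
  have hp1 : 0 < α - 2 + (m:ℝ) := by linarith
  have hp2 : 0 < α - 1 + (m:ℝ) := by linarith
  have hk : 0 < cesKernel α m := kpos α (by linarith) m
  have hprod : 0 < (α-2+(m:ℝ))*(α-1+(m:ℝ)) := mul_pos hp1 hp2
  have hneg2 : cesKernel α m * ((α-2)*(α-1)) < 0 :=
    mul_neg_of_pos_of_neg hk (by nlinarith)
  by_contra h'
  push_neg at h'
  nlinarith [mul_nonneg h' hprod.le]

lemma ka1_pos (m : ℕ) : 0 < cesKernel (α-1) m := kpos (α-1) (by linarith) m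

lemma ka1_le_one (m : ℕ) : cesKernel (α-1) m ≤ 1 := by
  induction m with
  | zero =>
    rw [kzero (α-1) (ne_of_gt (Real.Gamma_pos_of_pos (by linarith)))]
  | succ m ih =>
    have h := krecα1 hα1 hα2 m
    have hneg : cesKernel (α-2) (m+1) < 0 := kneg hα1 hα2 (m+1) (by omega)
    linarith

lemma kabs (m : ℕ) : |cesKernel (α-2) m| ≤ 1 := by
  rcases m with _ | m
  · rw [kzero (α-2) (hGa2ne hα1 hα2)]; norm_num
  · have h := krecα1 hα1 hα2 m
    have h1 := ka1_pos hα1 hα2 m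
    have h2 := ka1_pos hα1 hα2 (m+1)
    have h3 := ka1_le_one hα1 hα2 m
    have h4 := ka1_le_one hα1 hα2 (m+1)
    rw [abs_le]
    constructor <;> linarith

lemma kone_le (m : ℕ) : 1 ≤ cesKernel α m := by
  induction m with
  | zero => rw [kzero α (ne_of_gt (Real.Gamma_pos_of_pos (by linarith)))]
  | succ m ih =>
    have h := krecα hα1 hα2 m
    have := ka1_pos hα1 hα2 (m+1)
    linarith

lemma Kpos (m : ℕ) : 0 < cesKernel (α+1) m := kpos (α+1) (by linarith) m

lemma Kmono : Monotone (cesKernel (α+1)) := by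
  apply monotone_nat_of_le_succ
  intro m
  have h := krecK hα1 hα2 m
  have h2 : 0 < cesKernel α (m+1) := kpos α (by linarith) (m+1)
  linarith

lemma KgeN (n : ℕ) : ((n:ℝ)+1) ≤ cesKernel (α+1) n := by
  induction n with
  | zero =>
    push_cast
    rw [kzero (α+1) (ne_of_gt (Real.Gamma_pos_of_pos (by linarith)))]
    norm_num
  | succ n ih =>
    have h := krecK hα1 hα2 n
    have h2 := kone_le hα1 hα2 (n+1)
    push_cast
    push_cast at ih
    linarith

lemma Kstep (m : ℕ) :
    cesKernel (α+1) (m+1) * ((m:ℝ)+1) = cesKernel (α+1) m * (α+1+m) := by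
  unfold cesKernel
  have hnn : (0:ℝ) ≤ m := Nat.cast_nonneg m
  have h1 : α + 1 + (m:ℝ) ≠ 0 := by intro h; linarith
  have hm1 : ((m:ℝ) + 1) ≠ 0 := by positivity
  push_cast
  rw [show α + 1 + ((m:ℝ) + 1) = (α + 1 + m) + 1 by ring, Real.Gamma_add_one h1,
      show (m:ℝ) + 1 + 1 = ((m:ℝ) + 1) + 1 from rfl, Real.Gamma_add_one hm1]
  have hgm : Real.Gamma ((m:ℝ) + 1) ≠ 0 := ne_of_gt (gammaNatPos m)
  have hga : Real.Gamma (α+1) ≠ 0 := ne_of_gt (Real.Gamma_pos_of_pos (by linarith))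
  field_simp

lemma Kdouble (n : ℕ) : cesKernel (α+1) (n+2) ≤ 9 * cesKernel (α+1) n := by
  have step : ∀ m : ℕ, cesKernel (α+1) (m+1) ≤ 3 * cesKernel (α+1) m := by
    intro m
    have h := Kstep hα1 hα2 m
    have hnn : (0:ℝ) ≤ m := Nat.cast_nonneg m
    have hp : (0:ℝ) < (m:ℝ) + 1 := by positivity
    have hK := Kpos hα1 hα2 m
    nlinarith
  have h1 := step n
  have h2 := step (n+1)
  have hK := Kpos hα1 hα2 n
  push_cast at h2 ⊢
  nlinarith

end KernelFacts



variable {X : Type*} [NormedAddCommGroup X] [NormedSpace ℂ X]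

noncomputable def Sop (β : ℝ) (T : X →L[ℂ] X) (n : ℕ) : X →L[ℂ] X :=
  ∑ j ∈ Finset.range (n + 1), ((cesKernel β (n - j) : ℝ) : ℂ) • T ^ j

lemma Sop_mul_T (β : ℝ) (T : X →L[ℂ] X) (n : ℕ) :
    Sop β T n * T = Sop β T (n+1) - ((cesKernel β (n+1) : ℝ) : ℂ) • 1 := by
  unfold Sop
  rw [Finset.sum_mul,
    Finset.sum_range_succ' (fun j => ((cesKernel β (n+1-j) : ℝ) : ℂ) • T ^ j) (n+1)]
  simp only [Nat.succ_sub_succ_eq_sub, Nat.sub_zero, pow_zero, smul_mul_assoc, ← pow_succ]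
  abel

lemma Sop_succ (β : ℝ) (T : X →L[ℂ] X) (n : ℕ)
    (hrec : ∀ m : ℕ, cesKernel β (m+1) = cesKernel β m + cesKernel (β-1) (m+1))
    (h0 : cesKernel β 0 = 1) (h0' : cesKernel (β-1) 0 = 1) :
    Sop β T (n+1) = Sop β T n + Sop (β-1) T (n+1) := by
  unfold Sop
  rw [Finset.sum_range_succ,
    Finset.sum_range_succ (fun j => ((cesKernel (β-1) (n+1-j) : ℝ) : ℂ) • T ^ j)]
  simp only [Nat.sub_self, h0, h0']
  have key : ∀ j ∈ Finset.range (n+1),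
      ((cesKernel β (n+1-j) : ℝ) : ℂ) • T ^ j
        = ((cesKernel β (n-j) : ℝ) : ℂ) • T ^ j
          + ((cesKernel (β-1) (n+1-j) : ℝ) : ℂ) • T ^ j := by
    intro j hj
    have hj' : j ≤ n := Nat.lt_succ_iff.mp (Finset.mem_range.mp hj)
    have e : n + 1 - j = (n - j) + 1 := by omega
    rw [e, hrec (n-j), Complex.ofReal_add, add_smul]
  rw [Finset.sum_congr rfl key, Finset.sum_add_distrib]
  abel

lemma Sop_mul_sub (β : ℝ) (T : X →L[ℂ] X) (n : ℕ)
    (hrec : ∀ m : ℕ, cesKernel β (m+1) = cesKernel β m + cesKernel (β-1) (m+1))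
    (h0 : cesKernel β 0 = 1) (h0' : cesKernel (β-1) 0 = 1) :
    Sop β T n * (T - 1) = Sop (β-1) T (n+1)
      - (((cesKernel (β-1) (n+1) + cesKernel β n : ℝ)) : ℂ) • 1 := by
  rw [mul_sub, mul_one, Sop_mul_T, Sop_succ β T n hrec h0 h0', hrec n,
    Complex.ofReal_add, Complex.ofReal_add, add_smul, add_smul]
  abel


lemma telescope (f : ℕ → ℝ) (a b : ℕ) (hab : a ≤ b) :
    ∑ m ∈ Finset.Ico a b, (f m - f (m+1)) = f a - f b := by
  induction b, hab using Nat.le_induction with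
  | base => simp
  | succ b hab ih => rw [Finset.sum_Ico_succ_top hab, ih]; ring

end Stmt18Aux

set_option maxHeartbeats 1000000 in
open Stmt18Aux in
/-- Let `1 < α < 2` and `T` absolutely `(C,α)`-Cesàro bounded on a complex Banach space.
Then `‖M_T^α(n)(T - I)²‖ → 0`. -/
theorem stmt18 {X : Type*} [NormedAddCommGroup X] [NormedSpace ℂ X] [CompleteSpace X]
    (α : ℝ) (hα1 : 1 < α) (hα2 : α < 2) (T : X →L[ℂ] X) (hT : AbsCesaroBounded α T) :
    Tendsto (fun n : ℕ => ‖cesMean α T n * (T - 1) ^ 2‖) atTop (nhds 0) := by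
  classical
  obtain ⟨C, hC, hbd⟩ := hT
  have hα0 : (0:ℝ) < α := by linarith
  set D : ℝ := ‖T - (1 : X →L[ℂ] X)‖ with hDdef
  have hD0 : 0 ≤ D := norm_nonneg _
  have hns : ∀ (c : ℝ) (A : X →L[ℂ] X), ‖((c:ℝ):ℂ) • A‖ = |c| * ‖A‖ := by
    intro c A
    rw [norm_smul (α := ℂ) (β := X →L[ℂ] X), Complex.norm_real, Real.norm_eq_abs]
  have hKpos : ∀ m : ℕ, 0 < cesKernel (α+1) m := Kpos hα1 hα2
  have hkapos : ∀ m : ℕ, 0 < cesKernel α m := kpos α hα0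
  have hKmono : Monotone (cesKernel (α+1)) := Kmono hα1 hα2
  have hKgeN : ∀ n : ℕ, ((n:ℝ)+1) ≤ cesKernel (α+1) n := KgeN hα1 hα2
  -- the harmonic-type sum
  set H : ℕ → ℝ := fun N => ∑ i ∈ Finset.range (N+1), α / (α + (i:ℝ)) with hHdef
  have hHterm : ∀ i : ℕ, 0 ≤ α / (α + (i:ℝ)) := by
    intro i
    have : (0:ℝ) ≤ i := Nat.cast_nonneg i
    exact div_nonneg (by linarith) (by linarith)
  have hH1 : ∀ N : ℕ, (1:ℝ) ≤ H N := by
    intro N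
    have h0 : α / (α + ((0:ℕ):ℝ)) = 1 := by
      rw [Nat.cast_zero, add_zero, div_self (ne_of_gt hα0)]
    calc (1:ℝ) = α / (α + ((0:ℕ):ℝ)) := h0.symm
      _ ≤ H N := Finset.single_le_sum (fun i _ => hHterm i)
            (Finset.mem_range.mpr (Nat.succ_pos N))
  have hHpos : ∀ N : ℕ, (0:ℝ) < H N := fun N => lt_of_lt_of_le one_pos (hH1 N)
  have hHmono : Monotone H := by
    apply monotone_nat_of_le_succ
    intro N
    simp only [hHdef]
    apply Finset.sum_le_sum_of_subset_of_nonneg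
    · exact Finset.range_subset_range.mpr (by omega)
    · intro i _ _; exact hHterm i
  have hHtop : Tendsto H atTop atTop := by
    have hb : Tendsto (fun N : ℕ => (α/2) * ∑ i ∈ Finset.range (N+1), (1:ℝ)/((i:ℝ)+1))
        atTop atTop := by
      apply Tendsto.const_mul_atTop (by linarith : (0:ℝ) < α/2)
      exact Real.tendsto_sum_range_one_div_nat_succ_atTop.comp (tendsto_add_atTop_nat 1)
    apply tendsto_atTop_mono _ hb
    intro N
    simp only [hHdef]
    rw [Finset.mul_sum]
    apply Finset.sum_le_sum
    intro i _
    have hi : (0:ℝ) ≤ i := Nat.cast_nonneg i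
    rw [div_mul_div_comm, mul_one, div_le_div_iff₀ (by linarith) (by linarith)]
    nlinarith
  -- consequences of absolute Cesàro boundedness
  have hsum : ∀ (n : ℕ) (x : X),
      ∑ j ∈ Finset.range (n+1), cesKernel α (n-j) * ‖(T^j) x‖
        ≤ C * cesKernel (α+1) n * ‖x‖ := by
    intro n x
    have h := hbd n x
    rw [inv_mul_le_iff₀ (hKpos n)] at h
    exact h.trans_eq (by ring)
  have htermx : ∀ (n j : ℕ), j ∈ Finset.range (n+1) → ∀ x : X,
      cesKernel α (n-j) * ‖(T^j) x‖ ≤ C * cesKernel (α+1) n * ‖x‖ := by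
    intro n j hj x
    refine le_trans (Finset.single_le_sum
      (f := fun j => cesKernel α (n-j) * ‖(T^j) x‖) ?_ hj) (hsum n x)
    intro i _
    exact mul_nonneg (hkapos _).le (norm_nonneg _)
  have h0α : cesKernel α 0 = 1 := kzero α (ne_of_gt (Real.Gamma_pos_of_pos hα0))
  have hTj : ∀ j : ℕ, ‖T^j‖ ≤ C * cesKernel (α+1) j := by
    intro j
    apply ContinuousLinearMap.opNorm_le_bound _ (mul_nonneg hC.le (hKpos j).le)
    intro x
    have h := htermx j j (Finset.self_mem_range_succ j) x
    rw [Nat.sub_self, h0α, one_mul] at h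
    exact h
  have hTm : ∀ (N m : ℕ), m ≤ N → cesKernel α m * ‖T^(N-m)‖ ≤ C * cesKernel (α+1) N := by
    intro N m hm
    have hkp := hkapos m
    rw [mul_comm, ← le_div_iff₀ hkp]
    apply ContinuousLinearMap.opNorm_le_bound
    · exact (div_nonneg (mul_nonneg hC.le (hKpos N).le) hkp.le)
    · intro x
      have h := htermx N (N-m) (Finset.mem_range.mpr (by omega)) x
      rw [show N - (N - m) = m by omega] at h
      rw [div_mul_eq_mul_div, le_div_iff₀ hkp, mul_comm (‖(T ^ (N-m)) x‖) (cesKernel α m)]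
      exact h.trans_eq (by ring)
  have hTN : ∀ N : ℕ, ‖T^N‖ ≤ C^2 * cesKernel (α+1) N / H N := by
    intro N
    apply ContinuousLinearMap.opNorm_le_bound
    · exact div_nonneg (mul_nonneg (by positivity) (hKpos N).le) (hHpos N).le
    · intro x
      rw [div_mul_eq_mul_div, le_div_iff₀ (hHpos N)]
      have step : ∀ j ∈ Finset.range (N+1),
          α / (α + ((N - j : ℕ):ℝ)) * ‖(T^N) x‖
            ≤ C * (cesKernel α (N-j) * ‖(T^j) x‖) := by
        intro j hj
        have hj' : j ≤ N := Nat.lt_succ_iff.mp (Finset.mem_range.mp hj)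
        have hmnn : (0:ℝ) ≤ ((N-j:ℕ):ℝ) := Nat.cast_nonneg _
        have h1 : ‖(T^N) x‖ ≤ C * cesKernel (α+1) (N-j) * ‖(T^j) x‖ := by
          have hcomp : (T^N) x = (T^(N-j)) ((T^j) x) := by
            rw [← ContinuousLinearMap.mul_apply, ← pow_add, Nat.sub_add_cancel hj']
          rw [hcomp]
          calc ‖(T^(N-j)) ((T^j) x)‖ ≤ ‖T^(N-j)‖ * ‖(T^j) x‖ :=
                ContinuousLinearMap.le_opNorm _ _
            _ ≤ C * cesKernel (α+1) (N-j) * ‖(T^j) x‖ :=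
                mul_le_mul_of_nonneg_right (hTj (N-j)) (norm_nonneg _)
        have hαm : (0:ℝ) < α + ((N-j:ℕ):ℝ) := by linarith
        have hr := kratio α (N-j) (ne_of_gt hα0) (ne_of_gt hαm)
          (ne_of_gt (Real.Gamma_pos_of_pos hα0))
        rw [div_mul_eq_mul_div, div_le_iff₀ hαm]
        calc α * ‖(T^N) x‖ ≤ α * (C * cesKernel (α+1) (N-j) * ‖(T^j) x‖) :=
              mul_le_mul_of_nonneg_left h1 hα0.le
          _ = C * (cesKernel (α+1) (N-j) * α) * ‖(T^j) x‖ := by ring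
          _ = C * (cesKernel α (N-j) * (α + ((N-j:ℕ):ℝ))) * ‖(T^j) x‖ := by rw [hr]
          _ = C * (cesKernel α (N-j) * ‖(T^j) x‖) * (α + ((N-j:ℕ):ℝ)) := by ring
      have hsum2 := Finset.sum_le_sum step
      rw [← Finset.mul_sum] at hsum2
      have hrefl : ∑ j ∈ Finset.range (N+1), α / (α + ((N - j:ℕ):ℝ)) * ‖(T^N) x‖
          = H N * ‖(T^N) x‖ := by
        have hr2 := Finset.sum_range_reflect
          (fun i => α / (α + (i:ℝ)) * ‖(T^N) x‖) (N+1)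
        simp only [Nat.add_sub_cancel] at hr2
        rw [hr2]
        simp only [hHdef]
        rw [Finset.sum_mul]
      rw [hrefl] at hsum2
      calc ‖(T^N) x‖ * H N = H N * ‖(T^N) x‖ := by ring
        _ ≤ C * (C * cesKernel (α+1) N * ‖x‖) :=
            hsum2.trans (mul_le_mul_of_nonneg_left (hsum N x) hC.le)
        _ = C^2 * cesKernel (α+1) N * ‖x‖ := by ring
  -- kernel decomposition facts
  have h0α1 : cesKernel (α-1) 0 = 1 :=
    kzero _ (ne_of_gt (Real.Gamma_pos_of_pos (by linarith)))
  have h0α2 : cesKernel (α-2) 0 = 1 := kzero _ (hGa2ne hα1 hα2)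
  have hrec1 : ∀ m : ℕ, cesKernel α (m+1) = cesKernel α m + cesKernel (α-1) (m+1) :=
    krecα hα1 hα2
  have hrec2 : ∀ m : ℕ, cesKernel (α-1) (m+1)
      = cesKernel (α-1) m + cesKernel (α-1-1) (m+1) := by
    intro m
    rw [show α-1-1 = α-2 by ring]
    exact krecα1 hα1 hα2 m
  have hdecomp : ∀ n : ℕ, Sop α T n * (T-1)^2
      = Sop (α-2) T (n+2)
        - ((cesKernel (α-2) (n+2) + cesKernel (α-1) (n+1) : ℝ) : ℂ) • 1
        - ((cesKernel (α-1) (n+1) + cesKernel α n : ℝ) : ℂ) • (T - 1) := by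
    intro n
    have e1 := Sop_mul_sub α T n hrec1 h0α h0α1
    have e2 := Sop_mul_sub (α-1) T (n+1) hrec2 h0α1
      (by rw [show α-1-1 = α-2 by ring]; exact h0α2)
    rw [show α-1-1 = α-2 by ring] at e2
    rw [show (n+1)+1 = n+2 by omega] at e2
    calc Sop α T n * (T-1)^2 = (Sop α T n * (T-1)) * (T-1) := by
          rw [sq, mul_assoc]
      _ = (Sop (α-1) T (n+1)
            - ((cesKernel (α-1) (n+1) + cesKernel α n : ℝ) : ℂ) • 1) * (T-1) := by
          rw [e1]
      _ = Sop (α-1) T (n+1) * (T-1)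
            - ((cesKernel (α-1) (n+1) + cesKernel α n : ℝ) : ℂ) • (T-1) := by
          rw [sub_mul, smul_mul_assoc, one_mul]
      _ = _ := by rw [e2]
  -- norm bound for Sop (α-2)
  have hSnorm : ∀ N : ℕ, ‖Sop (α-2) T N‖
      ≤ ∑ m ∈ Finset.range (N+1), |cesKernel (α-2) m| * ‖T^(N-m)‖ := by
    intro N
    refine le_trans (norm_sum_le _ _) (le_of_eq ?_)
    have e : ∀ j ∈ Finset.range (N+1),
        ‖((cesKernel (α-2) (N-j) : ℝ) : ℂ) • T^j‖
          = |cesKernel (α-2) (N-j)| * ‖T^(N-(N-j))‖ := by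
      intro j hj
      have hj' : j ≤ N := Nat.lt_succ_iff.mp (Finset.mem_range.mp hj)
      rw [hns, show N - (N-j) = j by omega]
    rw [Finset.sum_congr rfl e]
    have hr2 := Finset.sum_range_reflect
      (fun m => |cesKernel (α-2) m| * ‖T^(N-m)‖) (N+1)
    simp only [Nat.add_sub_cancel] at hr2
    exact hr2
  -- the main sum bound
  have hB : ∀ (N M : ℕ), M ≤ N →
      (∑ m ∈ Finset.range (N+1), |cesKernel (α-2) m| * ‖T^(N-m)‖)
        ≤ ((M:ℝ)+1) * (C^2 * cesKernel (α+1) N / H (N-M))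
          + C * cesKernel (α+1) N * ((2-α)*(α-1)) * (α-1+(M:ℝ))⁻¹ := by
    intro N M hMN
    have hsplit : (∑ m ∈ Finset.range (N+1), |cesKernel (α-2) m| * ‖T^(N-m)‖)
        = (∑ m ∈ Finset.range (M+1), |cesKernel (α-2) m| * ‖T^(N-m)‖)
          + ∑ m ∈ Finset.Ico (M+1) (N+1), |cesKernel (α-2) m| * ‖T^(N-m)‖ := by
      simp only [Finset.range_eq_Ico]
      exact (Finset.sum_Ico_consecutive _ (by omega) (by omega)).symm
    rw [hsplit]
    have hpart2 : (∑ m ∈ Finset.range (M+1), |cesKernel (α-2) m| * ‖T^(N-m)‖)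
        ≤ ((M:ℝ)+1) * (C^2 * cesKernel (α+1) N / H (N-M)) := by
      have hb : ∀ m ∈ Finset.range (M+1),
          |cesKernel (α-2) m| * ‖T^(N-m)‖ ≤ C^2 * cesKernel (α+1) N / H (N-M) := by
        intro m hm
        have hm' : m ≤ M := Nat.lt_succ_iff.mp (Finset.mem_range.mp hm)
        have h1 : ‖T^(N-m)‖ ≤ C^2 * cesKernel (α+1) (N-m) / H (N-m) := hTN (N-m)
        have h2 : C^2 * cesKernel (α+1) (N-m) / H (N-m)
            ≤ C^2 * cesKernel (α+1) N / H (N-M) := by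
          apply div_le_div₀ (mul_nonneg (by positivity) (hKpos N).le)
            (mul_le_mul_of_nonneg_left (hKmono (Nat.sub_le N m)) (by positivity))
            (hHpos (N-M)) (hHmono (by omega))
        calc |cesKernel (α-2) m| * ‖T^(N-m)‖
            ≤ 1 * (C^2 * cesKernel (α+1) N / H (N-M)) := by
              apply mul_le_mul (kabs hα1 hα2 m) (h1.trans h2) (norm_nonneg _) one_pos.le
          _ = C^2 * cesKernel (α+1) N / H (N-M) := one_mul _
      calc (∑ m ∈ Finset.range (M+1), |cesKernel (α-2) m| * ‖T^(N-m)‖)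
          ≤ (Finset.range (M+1)).card • (C^2 * cesKernel (α+1) N / H (N-M)) :=
            Finset.sum_le_card_nsmul _ _ _ hb
        _ = ((M:ℝ)+1) * (C^2 * cesKernel (α+1) N / H (N-M)) := by
            rw [Finset.card_range, nsmul_eq_mul]
            push_cast
            ring
    have hpart1 : (∑ m ∈ Finset.Ico (M+1) (N+1), |cesKernel (α-2) m| * ‖T^(N-m)‖)
        ≤ C * cesKernel (α+1) N * ((2-α)*(α-1)) * (α-1+(M:ℝ))⁻¹ := by
      set f : ℕ → ℝ := fun m => (α - 2 + (m:ℝ))⁻¹ with hfdef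
      have hterm : ∀ m ∈ Finset.Ico (M+1) (N+1),
          |cesKernel (α-2) m| * ‖T^(N-m)‖
            ≤ (C * cesKernel (α+1) N * ((2-α)*(α-1))) * (f m - f (m+1)) := by
        intro m hm
        obtain ⟨hm1, hm2⟩ := Finset.mem_Ico.mp hm
        have hm1n : 1 ≤ m := by omega
        have hm1' : (1:ℝ) ≤ m := by exact_mod_cast hm1n
        have hp1 : (0:ℝ) < α - 2 + m := by linarith
        have hp2 : (0:ℝ) < α - 1 + m := by linarith
        have hfe : f m - f (m+1) = ((α-2+(m:ℝ))*(α-1+(m:ℝ)))⁻¹ := by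
          simp only [hfdef]
          push_cast
          rw [show α - 2 + ((m:ℝ)+1) = α - 1 + m by ring]
          rw [inv_sub_inv (ne_of_gt hp1) (ne_of_gt hp2)]
          rw [show α - 1 + (m:ℝ) - (α - 2 + (m:ℝ)) = 1 by ring, one_div]
        have habs : |cesKernel (α-2) m| * ((α-2+(m:ℝ))*(α-1+(m:ℝ)))
            = cesKernel α m * ((2-α)*(α-1)) := by
          have h := kratio2 hα1 hα2 m
          have hneg : cesKernel (α-2) m < 0 := kneg hα1 hα2 m hm1n
          rw [abs_of_neg hneg]
          nlinarith [h]
        have hPne : ((α-2+(m:ℝ))*(α-1+(m:ℝ))) ≠ 0 := ne_of_gt (mul_pos hp1 hp2)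
        have habs2 : |cesKernel (α-2) m|
            = cesKernel α m * ((2-α)*(α-1)) * (f m - f (m+1)) := by
          rw [hfe]
          field_simp
          linear_combination habs
        rw [habs2]
        have hfnn : 0 ≤ f m - f (m+1) := by
          rw [hfe]; positivity
        have hkT : cesKernel α m * ‖T^(N-m)‖ ≤ C * cesKernel (α+1) N :=
          hTm N m (by omega)
        calc cesKernel α m * ((2-α)*(α-1)) * (f m - f (m+1)) * ‖T^(N-m)‖
            = (cesKernel α m * ‖T^(N-m)‖) * (((2-α)*(α-1)) * (f m - f (m+1))) := by
              ring
          _ ≤ (C * cesKernel (α+1) N) * (((2-α)*(α-1)) * (f m - f (m+1))) := by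
              apply mul_le_mul_of_nonneg_right hkT
              apply mul_nonneg (by nlinarith) hfnn
          _ = (C * cesKernel (α+1) N * ((2-α)*(α-1))) * (f m - f (m+1)) := by ring
      calc (∑ m ∈ Finset.Ico (M+1) (N+1), |cesKernel (α-2) m| * ‖T^(N-m)‖)
          ≤ ∑ m ∈ Finset.Ico (M+1) (N+1),
              (C * cesKernel (α+1) N * ((2-α)*(α-1))) * (f m - f (m+1)) :=
            Finset.sum_le_sum hterm
        _ = (C * cesKernel (α+1) N * ((2-α)*(α-1))) * (f (M+1) - f (N+1)) := by
            rw [← Finset.mul_sum, telescope f (M+1) (N+1) (by omega)]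
        _ ≤ C * cesKernel (α+1) N * ((2-α)*(α-1)) * (α-1+(M:ℝ))⁻¹ := by
            have hcc : (0:ℝ) ≤ (2-α)*(α-1) := by nlinarith
            apply mul_le_mul_of_nonneg_left _
              (mul_nonneg (mul_nonneg hC.le (hKpos N).le) hcc)
            have hfM : f (M+1) = (α-1+(M:ℝ))⁻¹ := by
              simp only [hfdef]
              push_cast
              rw [show α - 2 + ((M:ℝ)+1) = α - 1 + M by ring]
            have hfN : 0 ≤ f (N+1) := by
              simp only [hfdef]
              push_cast
              have hNn : (0:ℝ) ≤ N := Nat.cast_nonneg N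
              have : (0:ℝ) < α - 2 + ((N:ℝ)+1) := by linarith
              exact (inv_nonneg).mpr this.le
            rw [← hfM]
            linarith
    linarith [hpart1, hpart2]
  -- the key estimate
  have key : ∀ (M n : ℕ), M ≤ n + 2 →
      ‖cesMean α T n * (T - 1)^2‖
        ≤ 9 * (((M:ℝ)+1) * C^2 / H (n+2-M))
          + 9 * (C * ((2-α)*(α-1)) * (α-1+(M:ℝ))⁻¹)
          + (2 + D) / ((n:ℝ)+1)
          + (2 / ((n:ℝ)+1)) * D := by
    intro M n hM
    have hMean : cesMean α T n * (T - 1)^2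
        = (((cesKernel (α+1) n)⁻¹ : ℝ) : ℂ) • (Sop α T n * (T - 1)^2) := by
      rw [cesMean, smul_mul_assoc]
      rfl
    have hnorm1 : ‖cesMean α T n * (T - 1)^2‖
        = (cesKernel (α+1) n)⁻¹ * ‖Sop α T n * (T - 1)^2‖ := by
      rw [hMean, hns, abs_of_nonneg (inv_nonneg.mpr (hKpos n).le)]
    have hone : ‖(1 : X →L[ℂ] X)‖ ≤ 1 := by
      rw [ContinuousLinearMap.one_def]
      exact ContinuousLinearMap.norm_id_le
    have hka1 := ka1_pos hα1 hα2 (n+1)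
    have hka1' := ka1_le_one hα1 hα2 (n+1)
    have hkab := kabs hα1 hα2 (n+2)
    have hkan := kone_le hα1 hα2 n
    have hnorm2 : ‖Sop α T n * (T - 1)^2‖
        ≤ (∑ m ∈ Finset.range (n+2+1), |cesKernel (α-2) m| * ‖T^(n+2-m)‖)
          + 2 + (1 + cesKernel α n) * D := by
      rw [hdecomp n]
      have habs1 : ‖((cesKernel (α-2) (n+2) + cesKernel (α-1) (n+1) : ℝ) : ℂ) • (1 : X →L[ℂ] X)‖ ≤ 2 := by
        rw [hns]
        have : |cesKernel (α-2) (n+2) + cesKernel (α-1) (n+1)| ≤ 2 := by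
          have := abs_add_le (cesKernel (α-2) (n+2)) (cesKernel (α-1) (n+1))
          rw [abs_of_pos hka1] at this
          linarith
        calc |cesKernel (α-2) (n+2) + cesKernel (α-1) (n+1)| * ‖(1 : X →L[ℂ] X)‖
            ≤ 2 * 1 := mul_le_mul this hone (norm_nonneg _) (by norm_num)
          _ = 2 := mul_one 2
      have habs2 : ‖((cesKernel (α-1) (n+1) + cesKernel α n : ℝ) : ℂ) • (T - 1)‖
          ≤ (1 + cesKernel α n) * D := by
        rw [hns]
        apply mul_le_mul _ le_rfl hD0 (by linarith)
        rw [abs_of_pos (by linarith)]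
        linarith
      calc ‖Sop (α-2) T (n+2)
            - ((cesKernel (α-2) (n+2) + cesKernel (α-1) (n+1) : ℝ) : ℂ) • 1
            - ((cesKernel (α-1) (n+1) + cesKernel α n : ℝ) : ℂ) • (T - 1)‖
          ≤ ‖Sop (α-2) T (n+2)
              - ((cesKernel (α-2) (n+2) + cesKernel (α-1) (n+1) : ℝ) : ℂ) • 1‖
            + ‖((cesKernel (α-1) (n+1) + cesKernel α n : ℝ) : ℂ) • (T - 1)‖ :=
            norm_sub_le _ _
        _ ≤ ‖Sop (α-2) T (n+2)‖
            + ‖((cesKernel (α-2) (n+2) + cesKernel (α-1) (n+1) : ℝ) : ℂ) • (1 : X →L[ℂ] X)‖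
            + ‖((cesKernel (α-1) (n+1) + cesKernel α n : ℝ) : ℂ) • (T - 1)‖ := by
            have := norm_sub_le (Sop (α-2) T (n+2))
              (((cesKernel (α-2) (n+2) + cesKernel (α-1) (n+1) : ℝ) : ℂ) • (1 : X →L[ℂ] X))
            linarith
        _ ≤ (∑ m ∈ Finset.range (n+2+1), |cesKernel (α-2) m| * ‖T^(n+2-m)‖)
            + 2 + (1 + cesKernel α n) * D := by
            have := hSnorm (n+2)
            linarith
    -- combine
    have hBn := hB (n+2) M hM
    set Kn := cesKernel (α+1) n with hKndef
    have hKninv : (0:ℝ) ≤ Kn⁻¹ := inv_nonneg.mpr (hKpos n).le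
    have hK9 : Kn⁻¹ * cesKernel (α+1) (n+2) ≤ 9 := by
      rw [inv_mul_le_iff₀ (hKpos n)]
      have := Kdouble hα1 hα2 n
      linarith
    have hE : 0 ≤ ((M:ℝ)+1) * C^2 / H (n+2-M) + C * ((2-α)*(α-1)) * (α-1+(M:ℝ))⁻¹ := by
      have hMnn : (0:ℝ) ≤ M := Nat.cast_nonneg M
      have h1 : (0:ℝ) ≤ ((M:ℝ)+1) * C^2 / H (n+2-M) :=
        div_nonneg (mul_nonneg (by linarith) (by positivity)) (hHpos _).le
      have h2 : (0:ℝ) ≤ C * ((2-α)*(α-1)) * (α-1+(M:ℝ))⁻¹ := by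
        apply mul_nonneg (mul_nonneg hC.le (by nlinarith))
        have : (0:ℝ) < α-1+(M:ℝ) := by linarith
        positivity
      linarith
    have hmain : Kn⁻¹ * (∑ m ∈ Finset.range (n+2+1), |cesKernel (α-2) m| * ‖T^(n+2-m)‖)
        ≤ 9 * (((M:ℝ)+1) * C^2 / H (n+2-M)) + 9 * (C * ((2-α)*(α-1)) * (α-1+(M:ℝ))⁻¹) := by
      have hBn' : (∑ m ∈ Finset.range (n+2+1), |cesKernel (α-2) m| * ‖T^(n+2-m)‖)
          ≤ cesKernel (α+1) (n+2)
            * (((M:ℝ)+1) * C^2 / H (n+2-M) + C * ((2-α)*(α-1)) * (α-1+(M:ℝ))⁻¹) := by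
        refine hBn.trans (le_of_eq ?_)
        field_simp
      calc Kn⁻¹ * (∑ m ∈ Finset.range (n+2+1), |cesKernel (α-2) m| * ‖T^(n+2-m)‖)
          ≤ Kn⁻¹ * (cesKernel (α+1) (n+2)
              * (((M:ℝ)+1) * C^2 / H (n+2-M) + C * ((2-α)*(α-1)) * (α-1+(M:ℝ))⁻¹)) :=
            mul_le_mul_of_nonneg_left hBn' hKninv
        _ = (Kn⁻¹ * cesKernel (α+1) (n+2))
              * (((M:ℝ)+1) * C^2 / H (n+2-M) + C * ((2-α)*(α-1)) * (α-1+(M:ℝ))⁻¹) := by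
            ring
        _ ≤ 9 * (((M:ℝ)+1) * C^2 / H (n+2-M) + C * ((2-α)*(α-1)) * (α-1+(M:ℝ))⁻¹) :=
            mul_le_mul_of_nonneg_right hK9 hE
        _ = 9 * (((M:ℝ)+1) * C^2 / H (n+2-M))
            + 9 * (C * ((2-α)*(α-1)) * (α-1+(M:ℝ))⁻¹) := by ring
    -- small terms
    have hnp : (0:ℝ) < (n:ℝ)+1 := by positivity
    have hKninv2 : Kn⁻¹ ≤ ((n:ℝ)+1)⁻¹ := by
      apply inv_anti₀ hnp (hKgeN n)
    have hr := kratio α n (ne_of_gt hα0)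
      (by have : (0:ℝ) ≤ n := Nat.cast_nonneg n; intro h; linarith)
      (ne_of_gt (Real.Gamma_pos_of_pos hα0))
    have hsm : Kn⁻¹ * cesKernel α n ≤ 2/((n:ℝ)+1) := by
      have hnn : (0:ℝ) ≤ n := Nat.cast_nonneg n
      have hαn : (0:ℝ) < α + n := by linarith
      have hkeq : cesKernel α n = Kn * α / (α+(n:ℝ)) := by
        rw [eq_div_iff (ne_of_gt hαn)]
        linarith [hr]
      rw [hkeq, hKndef]
      rw [show (cesKernel (α+1) n)⁻¹ * (cesKernel (α+1) n * α / (α+(n:ℝ)))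
          = (cesKernel (α+1) n)⁻¹ * (cesKernel (α+1) n) * (α / (α+(n:ℝ))) by ring,
        inv_mul_cancel₀ (ne_of_gt (hKpos n)), one_mul]
      rw [div_le_div_iff₀ hαn hnp]
      nlinarith
    have hsmall : Kn⁻¹ * (2 + (1 + cesKernel α n) * D)
        ≤ (2 + D) / ((n:ℝ)+1) + (2 / ((n:ℝ)+1)) * D := by
      have e : Kn⁻¹ * (2 + (1 + cesKernel α n) * D)
          = Kn⁻¹ * (2 + D) + (Kn⁻¹ * cesKernel α n) * D := by ring
      rw [e]
      have h1 : Kn⁻¹ * (2 + D) ≤ (2 + D) / ((n:ℝ)+1) := by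
        rw [div_eq_mul_inv, mul_comm]
        exact mul_le_mul_of_nonneg_left hKninv2 (by linarith)
      have h2 : (Kn⁻¹ * cesKernel α n) * D ≤ (2 / ((n:ℝ)+1)) * D :=
        mul_le_mul_of_nonneg_right hsm hD0
      linarith
    -- put it together
    rw [hnorm1]
    have hfinal : Kn⁻¹ * ‖Sop α T n * (T - 1)^2‖
        ≤ Kn⁻¹ * ((∑ m ∈ Finset.range (n+2+1), |cesKernel (α-2) m| * ‖T^(n+2-m)‖)
            + 2 + (1 + cesKernel α n) * D) :=
      mul_le_mul_of_nonneg_left hnorm2 hKninv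
    have e2 : Kn⁻¹ * ((∑ m ∈ Finset.range (n+2+1), |cesKernel (α-2) m| * ‖T^(n+2-m)‖)
            + 2 + (1 + cesKernel α n) * D)
        = Kn⁻¹ * (∑ m ∈ Finset.range (n+2+1), |cesKernel (α-2) m| * ‖T^(n+2-m)‖)
          + Kn⁻¹ * (2 + (1 + cesKernel α n) * D) := by ring
    rw [e2] at hfinal
    linarith [hfinal, hmain, hsmall]
  -- final epsilon argument
  rw [Metric.tendsto_atTop]
  intro ε hε
  set c2 : ℝ := 9 * (C * ((2-α)*(α-1))) with hc2def
  have hc2pos : 0 < c2 := by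
    rw [hc2def]
    have h1 : (0:ℝ) < 2 - α := by linarith
    have h2 : (0:ℝ) < α - 1 := by linarith
    positivity
  obtain ⟨M, hM⟩ := exists_nat_gt (c2 / (ε/4))
  have hMpos : (0:ℝ) < α - 1 + M := by
    have : (0:ℝ) ≤ M := Nat.cast_nonneg M
    linarith
  have hterm2 : 9 * (C * ((2-α)*(α-1)) * (α-1+(M:ℝ))⁻¹) < ε/4 := by
    have e : 9 * (C * ((2-α)*(α-1)) * (α-1+(M:ℝ))⁻¹) = c2 / (α-1+(M:ℝ)) := by
      rw [hc2def, div_eq_mul_inv]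
      ring
    rw [e, div_lt_iff₀ hMpos]
    have h4 : (0:ℝ) < ε/4 := by linarith
    rw [div_lt_iff₀ h4] at hM
    nlinarith
  set a : ℝ := 9 * (((M:ℝ)+1) * C^2) with hadef
  have hapos : 0 < a := by
    rw [hadef]
    have : (0:ℝ) ≤ M := Nat.cast_nonneg M
    positivity
  obtain ⟨n₁, hn₁⟩ := Filter.eventually_atTop.mp (hHtop.eventually_ge_atTop (4*a/ε + 1))
  obtain ⟨n₂, hn₂⟩ := exists_nat_gt ((2+3*D)*2/ε)
  refine ⟨M + n₁ + n₂ + 1, fun n hn => ?_⟩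
  have hMn : M ≤ n + 2 := by omega
  have hkey := key M n hMn
  have hterm1 : 9 * (((M:ℝ)+1) * C^2 / H (n+2-M)) < ε/4 := by
    have hHk := hn₁ (n+2-M) (by omega)
    have hHkpos : 0 < H (n+2-M) := hHpos _
    have e : 9 * (((M:ℝ)+1) * C^2 / H (n+2-M)) = a / H (n+2-M) := by
      rw [hadef]
      ring
    rw [e, div_lt_iff₀ hHkpos]
    have h2 : (0:ℝ) < ε := hε
    have hR : ε/4 * (4*a/ε + 1) = a + ε/4 := by
      field_simp
    have h6 : ε/4 * (4*a/ε + 1) ≤ ε/4 * H (n+2-M) :=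
      mul_le_mul_of_nonneg_left hHk (by linarith)
    linarith
  have hsmalls : (2 + D) / ((n:ℝ)+1) + (2 / ((n:ℝ)+1)) * D < ε/2 := by
    have hnp : (0:ℝ) < (n:ℝ)+1 := by positivity
    have e : (2 + D) / ((n:ℝ)+1) + (2 / ((n:ℝ)+1)) * D = (2 + 3*D)/((n:ℝ)+1) := by
      field_simp
      ring
    rw [e, div_lt_iff₀ hnp]
    have hn2 : ((n₂:ℝ)) ≤ (n:ℝ) := by exact_mod_cast (by omega : n₂ ≤ n)
    have hεp : (0:ℝ) < ε := hε
    rw [div_lt_iff₀ hεp] at hn₂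
    nlinarith
  rw [Real.dist_eq, sub_zero, abs_of_nonneg (norm_nonneg _)]
  calc ‖cesMean α T n * (T - 1)^2‖
      ≤ 9 * (((M:ℝ)+1) * C^2 / H (n+2-M))
        + 9 * (C * ((2-α)*(α-1)) * (α-1+(M:ℝ))⁻¹)
        + (2 + D) / ((n:ℝ)+1) + (2 / ((n:ℝ)+1)) * D := hkey
    _ < ε/4 + ε/4 + ε/2 := by linarith
    _ = ε := by ring
end
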